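/- arXiv:1912.06204 — 4 statements merged into one kernel-verified Lean document; each statement's English description precedes it below -/
import Mathlib

section
/- Let n be a nilpotent real Lie algebra and D ∈ Der(n). For any c > 0, X ∈ n and h ∈ Aut(n), the map D' := c(hDh⁻¹ − ad_n X) is a derivation of n, and the solvable Lie algebras s_{D'} and s_D are isomorphic as Lie algebras. -/
/-! The isomorphism `s_{c (h D h⁻¹ - ad X)} ≅ s_D` is a composite of three elementary ones:
rescaling the `ℝ f` coordinate by `c` absorbs the factor `c`, the shear `f ↦ f - X` absorbs
the inner derivation `ad X`, and `h⁻¹` on the `n` coordinate undoes the conjugation. -/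

noncomputable section

variable {n : Type*} [LieRing n] [LieAlgebra ℝ n]

/-- The bracket of the solvable extension `s_D = ℝ f ⊕ n`, where `f = (1, 0)`:
`[(a,X), (b,Y)] = (0, a • D Y - b • D X + ⁅X, Y⁆)`. -/
def sBrFun (D : n →ₗ[ℝ] n) (p q : ℝ × n) : ℝ × n :=
  (0, p.1 • D q.2 - q.1 • D p.2 + ⁅p.2, q.2⁆)

section Derivation

variable {R L : Type*} [CommRing R] [LieRing L] [LieAlgebra R L]

def IsDerivation (D : L →ₗ[R] L) : Prop :=
  ∀ x y : L, D ⁅x, y⁆ = ⁅D x, y⁆ + ⁅x, D y⁆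

theorem isDerivation_ad (X : L) : IsDerivation (LieAlgebra.ad R L X) :=
  leibniz_lie X

theorem IsDerivation.sub {D₁ D₂ : L →ₗ[R] L} (h₁ : IsDerivation D₁) (h₂ : IsDerivation D₂) :
    IsDerivation (D₁ - D₂) := fun x y => by
  simp only [LinearMap.sub_apply, h₁ x y, h₂ x y, sub_lie, lie_sub]
  abel

theorem IsDerivation.smul {D : L →ₗ[R] L} (hD : IsDerivation D) (c : R) :
    IsDerivation (c • D) := fun x y => by
  simp only [LinearMap.smul_apply, hD x y, smul_add, smul_lie, lie_smul]

theorem IsDerivation.conj {D : L →ₗ[R] L} (hD : IsDerivation D) (h : L ≃ₗ⁅R⁆ L) :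
    IsDerivation (h.toLinearEquiv.toLinearMap ∘ₗ D ∘ₗ h.symm.toLinearEquiv.toLinearMap) :=
  fun x y => by
    have hx : ⁅h (D (h.symm x)), y⁆ = h ⁅D (h.symm x), h.symm y⁆ := by
      rw [h.map_lie, h.apply_symm_apply]
    have hy : ⁅x, h (D (h.symm y))⁆ = h ⁅h.symm x, D (h.symm y)⁆ := by
      rw [h.map_lie, h.apply_symm_apply]
    simp only [LinearMap.comp_apply, LinearEquiv.coe_coe, LieEquiv.coe_toLinearEquiv]
    rw [h.symm.map_lie, hD, map_add, hx, hy]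

end Derivation

/-- `s_{D'}` and `s_D` are isomorphic Lie algebras. -/
def SIsomorphic (D' D : n →ₗ[ℝ] n) : Prop :=
  ∃ e : (ℝ × n) ≃ₗ[ℝ] (ℝ × n), ∀ p q : ℝ × n, e (sBrFun D' p q) = sBrFun D (e p) (e q)

theorem SIsomorphic.trans {D₁ D₂ D₃ : n →ₗ[ℝ] n} (h₁₂ : SIsomorphic D₁ D₂)
    (h₂₃ : SIsomorphic D₂ D₃) : SIsomorphic D₁ D₃ := by
  obtain ⟨e₁, he₁⟩ := h₁₂
  obtain ⟨e₂, he₂⟩ := h₂₃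
  exact ⟨e₁.trans e₂, fun p q => by simp only [LinearEquiv.trans_apply, he₁, he₂]⟩

theorem sIsomorphic_smul (D : n →ₗ[ℝ] n) {c : ℝ} (hc : c ≠ 0) : SIsomorphic (c • D) D :=
  ⟨(LinearEquiv.smulOfNeZero ℝ ℝ c hc).prodCongr (LinearEquiv.refl ℝ n), fun p q => by
    simp [sBrFun, smul_smul, mul_comm]⟩

theorem sIsomorphic_sub_ad (D : n →ₗ[ℝ] n) (X : n) :
    SIsomorphic (D - LieAlgebra.ad ℝ n X) D :=
  ⟨(LinearEquiv.refl ℝ ℝ).skewProd (LinearEquiv.refl ℝ n) (LinearMap.toSpanSingleton ℝ n (-X)),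
    fun ⟨a, Y⟩ ⟨b, Z⟩ => by
      simp only [sBrFun, LinearEquiv.skewProd_apply, LinearEquiv.refl_apply,
        LinearMap.toSpanSingleton_apply, LinearMap.sub_apply, LieAlgebra.ad_apply, zero_smul,
        add_zero, Prod.mk.injEq, true_and]
      rw [← lie_skew X Y]
      simp only [map_add, map_smul, map_neg, add_lie, lie_add, smul_lie, lie_smul, neg_lie,
        lie_neg, lie_self]
      module⟩

theorem sIsomorphic_conj (D : n →ₗ[ℝ] n) (h : n ≃ₗ⁅ℝ⁆ n) :
    SIsomorphic (h.toLinearEquiv.toLinearMap ∘ₗ D ∘ₗ h.symm.toLinearEquiv.toLinearMap) D :=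
  ⟨(LinearEquiv.refl ℝ ℝ).prodCongr h.symm.toLinearEquiv, fun p q => by
    simp [sBrFun, h.symm.map_lie]⟩

theorem sD_isomorphic_of_conjugate_general
    (D : n →ₗ[ℝ] n) (hD : ∀ x y : n, D ⁅x, y⁆ = ⁅D x, y⁆ + ⁅x, D y⁆)
    (c : ℝ) (hc : 0 < c) (X : n) (h : n ≃ₗ⁅ℝ⁆ n)
    (D' : n →ₗ[ℝ] n)
    (hD' : D' = c • (h.toLinearEquiv.toLinearMap ∘ₗ D ∘ₗ h.symm.toLinearEquiv.toLinearMap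
      - LieAlgebra.ad ℝ n X)) :
    (∀ x y : n, D' ⁅x, y⁆ = ⁅D' x, y⁆ + ⁅x, D' y⁆) ∧
    ∃ e : (ℝ × n) ≃ₗ[ℝ] (ℝ × n), ∀ p q : ℝ × n,
      e (sBrFun D' p q) = sBrFun D (e p) (e q) := by
  subst hD'
  refine ⟨((IsDerivation.conj hD h).sub (isDerivation_ad X)).smul c, ?_⟩
  exact ((sIsomorphic_smul _ hc.ne').trans (sIsomorphic_sub_ad _ X)).trans (sIsomorphic_conj D h)

/-- For a derivation `D` of a nilpotent Lie algebra `n`, any `c > 0`, `X ∈ n` and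
`h ∈ Aut(n)`, the map `D' = c (h D h⁻¹ - ad_n X)` is again a derivation of `n`, and the
solvable Lie algebras `s_{D'}` and `s_D` are isomorphic. -/
theorem sD_isomorphic_of_conjugate [LieRing.IsNilpotent n]
    (D : n →ₗ[ℝ] n) (hD : ∀ x y : n, D ⁅x, y⁆ = ⁅D x, y⁆ + ⁅x, D y⁆)
    (c : ℝ) (hc : 0 < c) (X : n) (h : n ≃ₗ⁅ℝ⁆ n)
    (D' : n →ₗ[ℝ] n)
    (hD' : D' = c • (h.toLinearEquiv.toLinearMap ∘ₗ D ∘ₗ h.symm.toLinearEquiv.toLinearMap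
      - LieAlgebra.ad ℝ n X)) :
    (∀ x y : n, D' ⁅x, y⁆ = ⁅D' x, y⁆ + ⁅x, D' y⁆) ∧
    ∃ e : (ℝ × n) ≃ₗ[ℝ] (ℝ × n), ∀ p q : ℝ × n,
      e (sBrFun D' p q) = sBrFun D (e p) (e q) :=
  sD_isomorphic_of_conjugate_general D hD c hc X h D' hD'

end
end

section
/- Let n be a nilpotent real Lie algebra. The set Der(n)_rn of Ricci negative derivations of n is an open subset of Der(n), is invariant under multiplication by positive scalars (i.e., it is an open cone), and is invariant under conjugation by Aut(n): if D ∈ Der(n)_rn, c > 0 and h ∈ Aut(n), then cD ∈ Der(n)_rn and hDh⁻¹ ∈ Der(n)_rn. -/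
open Finset

noncomputable section

variable {V : Type*} [AddCommGroup V] [Module ℝ V] {ι : Type*} [Fintype ι] [DecidableEq ι]

/-- The inner product on `V` making the basis `b` orthonormal. -/
def bip (b : Module.Basis ι ℝ V) (x y : V) : ℝ := ∑ i, b.repr x i * b.repr y i

/-- The element `H` with `⟨H, X⟩ = tr (ad_μ X)` for the inner product of `b`. -/
def ricH (b : Module.Basis ι ℝ V) (μ : V →ₗ[ℝ] V →ₗ[ℝ] V) : V :=
  ∑ i, (LinearMap.trace ℝ V (μ (b i))) • b i

/-- The Ricci curvature form of the metric Lie algebra `(V, μ, bip b)`. -/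
def ricciForm (b : Module.Basis ι ℝ V) (μ : V →ₗ[ℝ] V →ₗ[ℝ] V) (X Y : V) : ℝ :=
  -(1/2) * ∑ i, ∑ j, bip b (μ X (b i)) (b j) * bip b (μ Y (b i)) (b j)
  + (1/4) * ∑ i, ∑ j, bip b (μ (b i) (b j)) X * bip b (μ (b i) (b j)) Y
  - (1/2) * (LinearMap.trace ℝ V ((μ X) ∘ₗ (μ Y)))
  - (1/2) * (bip b (μ (ricH b μ) X) Y + bip b (μ (ricH b μ) Y) X)

/-- The Ricci operator of `(V, μ, bip b)` is negative definite. -/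
def RicciNegDef (b : Module.Basis ι ℝ V) (μ : V →ₗ[ℝ] V →ₗ[ℝ] V) : Prop :=
  ∀ X : V, X ≠ 0 → ricciForm b μ X X < 0

/-- The bracket of the solvable extension `s_D = ℝ f ⊕ n`. -/
def sBr (μ : V →ₗ[ℝ] V →ₗ[ℝ] V) (D : V →ₗ[ℝ] V) :
    (ℝ × V) →ₗ[ℝ] (ℝ × V) →ₗ[ℝ] (ℝ × V) :=
  (((LinearMap.lsmul ℝ V).compl₁₂ (LinearMap.fst ℝ ℝ V) (D ∘ₗ LinearMap.snd ℝ ℝ V))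
    - ((LinearMap.lsmul ℝ V).compl₁₂ (LinearMap.fst ℝ ℝ V) (D ∘ₗ LinearMap.snd ℝ ℝ V)).flip
    + μ.compl₁₂ (LinearMap.snd ℝ ℝ V) (LinearMap.snd ℝ ℝ V)).compr₂ (LinearMap.inr ℝ ℝ V)

/-- Nilpotency of the bracket `μ`. -/
def IsNilpotentBr (μ : V →ₗ[ℝ] V →ₗ[ℝ] V) : Prop :=
  ∃ N : ℕ, ∀ (f : Fin N → V) (y : V), (List.ofFn f).foldr (fun x a => μ x a) y = 0

/-- `μ` is a Lie bracket on `V`. -/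
def IsLieBr (μ : V →ₗ[ℝ] V →ₗ[ℝ] V) : Prop :=
  (∀ x, μ x x = 0) ∧ ∀ x y z, μ x (μ y z) + μ y (μ z x) + μ z (μ x y) = 0

variable (m : ℕ) (lam : (Fin m → ℝ) →ₗ[ℝ] (Fin m → ℝ) →ₗ[ℝ] (Fin m → ℝ))

/-- The set `Der(n)` of derivations of `n = (ℝ^m, lam)`, as matrices. -/
def derSet : Set (Matrix (Fin m) (Fin m) ℝ) :=
  {D | ∀ x y, D.mulVec (lam x y) = lam (D.mulVec x) y + lam x (D.mulVec y)}

/-- The set `Der(n)_rn` of Ricci negative derivations of `n`: derivations `D` with `tr D > 0`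
such that `s_D` admits an inner product of negative Ricci curvature. -/
def rnSet : Set (Matrix (Fin m) (Fin m) ℝ) :=
  {D | D ∈ derSet m lam ∧ 0 < D.trace ∧
    ∃ b : Module.Basis (Unit ⊕ Fin m) ℝ (ℝ × (Fin m → ℝ)),
      RicciNegDef b (sBr lam D.mulVecLin)}


/-!
If `e : n' ≃ n` is an isomorphism of brackets with `e D' e⁻¹ = c D` and `c ≠ 0`, then
`(t, x) ↦ (c t, e x)` is an isomorphism `s_{D'} ≃ s_D`, and the Ricci form of the pulled-back
inner product is the pullback of the Ricci form. With `e = id` this gives the cone property, with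
`c = 1` and `e = h⁻¹` the `Aut(n)`-invariance. For openness, fix the basis: the Ricci form of
`s_D` depends continuously on `(D, X)` and is quadratic in `X`, so its negativity on the compact
unit sphere persists for all `D` near a given one.
-/

section Transport

variable {κ : Type*} [Fintype κ] {W : Type*} [AddCommGroup W] [Module ℝ W]

lemma ricciForm_map (b : Module.Basis κ ℝ V) {μ : V →ₗ[ℝ] V →ₗ[ℝ] V} {μ' : W →ₗ[ℝ] W →ₗ[ℝ] W}
    (φ : W ≃ₗ[ℝ] V) (hφ : ∀ x y, φ (μ' x y) = μ (φ x) (φ y)) (X Y : W) :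
    ricciForm (b.map φ.symm) μ' X Y = ricciForm b μ (φ X) (φ Y) := by
  have hμ' : ∀ x y, μ' x y = φ.symm (μ (φ x) (φ y)) := fun x y => by
    rw [← hφ, LinearEquiv.symm_apply_apply]
  have had : ∀ x, μ' x = φ.symm.conj (μ (φ x)) := fun x => by
    ext y; simp [LinearEquiv.conj_apply, hμ']
  have hH : ricH (b.map φ.symm) μ' = φ.symm (ricH b μ) := by
    simp only [ricH, map_sum, map_smul, Module.Basis.map_apply, had,
      LinearEquiv.apply_symm_apply, LinearMap.trace_conj']
  have hcomp : μ' X ∘ₗ μ' Y = φ.symm.conj (μ (φ X) ∘ₗ μ (φ Y)) := by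
    rw [had, had, LinearEquiv.conj_comp]
  simp only [ricciForm, hH, hcomp, LinearMap.trace_conj', bip, Module.Basis.map_repr,
    Module.Basis.map_apply, hμ', LinearEquiv.symm_symm, LinearEquiv.trans_apply,
    LinearEquiv.apply_symm_apply]

lemma RicciNegDef.of_map {b : Module.Basis κ ℝ V} {μ : V →ₗ[ℝ] V →ₗ[ℝ] V}
    {μ' : W →ₗ[ℝ] W →ₗ[ℝ] W} (h : RicciNegDef b μ) (φ : W ≃ₗ[ℝ] V)
    (hφ : ∀ x y, φ (μ' x y) = μ (φ x) (φ y)) : RicciNegDef (b.map φ.symm) μ' := fun X hX => by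
  rw [ricciForm_map b φ hφ]
  exact h (φ X) (φ.map_ne_zero_iff.mpr hX)

lemma sBr_apply_s3 (μ : V →ₗ[ℝ] V →ₗ[ℝ] V) (D : V →ₗ[ℝ] V) (u v : ℝ × V) :
    sBr μ D u v = (0, u.1 • D v.2 - v.1 • D u.2 + μ u.2 v.2) := rfl

lemma sBr_prodCongr {μ : V →ₗ[ℝ] V →ₗ[ℝ] V} {μ' : W →ₗ[ℝ] W →ₗ[ℝ] W} {D : V →ₗ[ℝ] V}
    {D' : W →ₗ[ℝ] W} {c : ℝ} (hc : c ≠ 0) (e : W ≃ₗ[ℝ] V)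
    (he : ∀ x y, e (μ' x y) = μ (e x) (e y)) (hD : ∀ x, e (D' x) = c • D (e x)) (u v : ℝ × W) :
    (LinearEquiv.smulOfNeZero ℝ ℝ c hc).prodCongr e (sBr μ' D' u v) =
      sBr μ D ((LinearEquiv.smulOfNeZero ℝ ℝ c hc).prodCongr e u)
        ((LinearEquiv.smulOfNeZero ℝ ℝ c hc).prodCongr e v) := by
  simp only [sBr_apply_s3, LinearEquiv.prodCongr_apply, LinearEquiv.smulOfNeZero_apply, map_add,
    map_sub, map_smul, hD, he, smul_smul, smul_eq_mul, zero_mul, mul_comm c]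

lemma exists_ricciNegDef_sBr_of_equiv {μ : V →ₗ[ℝ] V →ₗ[ℝ] V} {μ' : W →ₗ[ℝ] W →ₗ[ℝ] W}
    {D : V →ₗ[ℝ] V} {D' : W →ₗ[ℝ] W} {c : ℝ} (hc : c ≠ 0) (e : W ≃ₗ[ℝ] V)
    (he : ∀ x y, e (μ' x y) = μ (e x) (e y)) (hD : ∀ x, e (D' x) = c • D (e x))
    (h : ∃ b : Module.Basis κ ℝ (ℝ × V), RicciNegDef b (sBr μ D)) :
    ∃ b : Module.Basis κ ℝ (ℝ × W), RicciNegDef b (sBr μ' D') :=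
  let ⟨_, hb⟩ := h
  ⟨_, hb.of_map _ (sBr_prodCongr hc e he hD)⟩

end Transport

section Homogeneity

variable {κ : Type*} [Fintype κ]

lemma bip_smul_left (b : Module.Basis κ ℝ V) (c : ℝ) (x y : V) :
    bip b (c • x) y = c * bip b x y := by
  simp [bip, Finset.mul_sum, mul_assoc]

lemma bip_smul_right (b : Module.Basis κ ℝ V) (c : ℝ) (x y : V) :
    bip b x (c • y) = c * bip b x y := by
  simp [bip, Finset.mul_sum, mul_left_comm]

lemma ricciForm_smul (b : Module.Basis κ ℝ V) (μ : V →ₗ[ℝ] V →ₗ[ℝ] V) (c : ℝ) (X : V) :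
    ricciForm b μ (c • X) (c • X) = c ^ 2 * ricciForm b μ X X := by
  simp only [ricciForm, map_smul, LinearMap.smul_apply, bip_smul_left, bip_smul_right,
    LinearMap.comp_smul, LinearMap.smul_comp, smul_eq_mul, mul_mul_mul_comm c, ← Finset.mul_sum]
  ring

end Homogeneity

lemma LinearMap.trace_eq_sum_repr {R M κ : Type*} [CommRing R] [AddCommGroup M] [Module R M]
    [Fintype κ] (b : Module.Basis κ R M) (f : M →ₗ[R] M) :
    LinearMap.trace R M f = ∑ i, b.repr (f (b i)) i := by
  classical
  simp [LinearMap.trace_eq_matrix_trace R b f, Matrix.trace, LinearMap.toMatrix_apply]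

section Continuity

variable {κ : Type*} {E : Type*} [NormedAddCommGroup E] [NormedSpace ℝ E]
  {α : Type*} [TopologicalSpace α]

@[fun_prop]
lemma Continuous.basis_repr [FiniteDimensional ℝ E] (b : Module.Basis κ ℝ E) {f : α → E}
    (hf : Continuous f) (i : κ) : Continuous fun a => b.repr (f a) i :=
  (map_continuous (b.coord i)).comp hf

lemma continuous_ricciForm [Fintype κ] [FiniteDimensional ℝ E] (b : Module.Basis κ ℝ E)
    {μ : α → E →ₗ[ℝ] E →ₗ[ℝ] E} (hμ : Continuous fun p : α × E × E => μ p.1 p.2.1 p.2.2) :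
    Continuous fun p : α × E => ricciForm b (μ p.1) p.2 p.2 := by
  simp only [ricciForm, ricH, bip, LinearMap.trace_eq_sum_repr b, LinearMap.comp_apply]
  fun_prop

lemma isOpen_setOf_forall_ne_zero_neg [ProperSpace E] {Q : α → E → ℝ}
    (hQ : Continuous fun p : α × E => Q p.1 p.2)
    (hsmul : ∀ a (c : ℝ) x, Q a (c • x) = c ^ 2 * Q a x) :
    IsOpen {a | ∀ x, x ≠ 0 → Q a x < 0} := by
  refine isOpen_iff_eventually.mpr fun a₀ hneg => ?_
  have hsphere : ∀ᶠ a in nhds a₀, ∀ x ∈ Metric.sphere (0 : E) 1, Q a x < 0 :=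
    (isCompact_sphere 0 1).eventually_forall_of_forall_eventually fun x hx =>
      (hQ.tendsto (a₀, x)).eventually
        (eventually_lt_nhds (hneg x (ne_zero_of_mem_unit_sphere ⟨x, hx⟩)))
  filter_upwards [hsphere] with a ha x hx
  have hnorm : 0 < ‖x‖ := norm_pos_iff.mpr hx
  calc Q a x = ‖x‖ ^ 2 * Q a (‖x‖⁻¹ • x) := by
        rw [← hsmul, smul_inv_smul₀ hnorm.ne']
    _ < 0 := mul_neg_of_pos_of_neg (by positivity) (ha _ (by simp [norm_smul, hnorm.ne']))

end Continuity

open Matrix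

lemma continuous_sBr_mulVecLin :
    Continuous fun p : Matrix (Fin m) (Fin m) ℝ × (ℝ × (Fin m → ℝ)) × (ℝ × (Fin m → ℝ)) =>
      sBr lam p.1.mulVecLin p.2.1 p.2.2 := by
  simp only [sBr_apply_s3, mulVecLin_apply]
  fun_prop

lemma isOpen_setOf_ricciNegDef_sBr (b : Module.Basis (Unit ⊕ Fin m) ℝ (ℝ × (Fin m → ℝ))) :
    IsOpen {D : Matrix (Fin m) (Fin m) ℝ | RicciNegDef b (sBr lam D.mulVecLin)} :=
  isOpen_setOf_forall_ne_zero_neg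
    (continuous_ricciForm b (μ := fun D : Matrix (Fin m) (Fin m) ℝ => sBr lam D.mulVecLin)
      (continuous_sBr_mulVecLin m lam))
    fun D => ricciForm_smul b (sBr lam D.mulVecLin)

lemma isOpen_setOf_trace_pos_ricciNegDef_sBr :
    IsOpen {D : Matrix (Fin m) (Fin m) ℝ | 0 < D.trace ∧
      ∃ b : Module.Basis (Unit ⊕ Fin m) ℝ (ℝ × (Fin m → ℝ)),
        RicciNegDef b (sBr lam D.mulVecLin)} := by
  simp only [Set.ofPred_and, Set.ofPred_exists]
  exact (isOpen_lt continuous_const continuous_id.matrix_trace).inter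
    (isOpen_iUnion (isOpen_setOf_ricciNegDef_sBr m lam))

lemma smul_mem_derSet {D : Matrix (Fin m) (Fin m) ℝ} (hD : D ∈ derSet m lam) (c : ℝ) :
    c • D ∈ derSet m lam := fun x y => by
  simp only [smul_mulVec, hD x y, map_smul, LinearMap.smul_apply, smul_add]

lemma smul_mem_rnSet {D : Matrix (Fin m) (Fin m) ℝ} (hD : D ∈ rnSet m lam) {c : ℝ}
    (hc : 0 < c) : c • D ∈ rnSet m lam := by
  obtain ⟨hder, htr, hricci⟩ := hD
  refine ⟨smul_mem_derSet m lam hder c, by simpa [trace_smul] using mul_pos hc htr, ?_⟩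
  exact exists_ricciNegDef_sBr_of_equiv (D := D.mulVecLin) hc.ne' (LinearEquiv.refl ℝ _)
    (fun _ _ => rfl) (fun x => smul_mulVec c D x) hricci

section Automorphism

variable {h : (Matrix (Fin m) (Fin m) ℝ)ˣ}

lemma units_mulVec_inv_mulVec (x : Fin m → ℝ) :
    (h : Matrix (Fin m) (Fin m) ℝ) *ᵥ (↑h⁻¹ *ᵥ x) = x := by
  rw [mulVec_mulVec, Units.mul_inv, one_mulVec]

lemma units_inv_mulVec_mulVec (x : Fin m → ℝ) :
    (↑h⁻¹ : Matrix (Fin m) (Fin m) ℝ) *ᵥ (↑h *ᵥ x) = x := by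
  rw [mulVec_mulVec, Units.inv_mul, one_mulVec]

lemma units_inv_mulVec_lam
    (hAut : ∀ x y, (h : Matrix (Fin m) (Fin m) ℝ) *ᵥ lam x y = lam (↑h *ᵥ x) (↑h *ᵥ y))
    (x y : Fin m → ℝ) :
    (↑h⁻¹ : Matrix (Fin m) (Fin m) ℝ) *ᵥ lam x y = lam (↑h⁻¹ *ᵥ x) (↑h⁻¹ *ᵥ y) := by
  conv_lhs => rw [← units_mulVec_inv_mulVec m x, ← units_mulVec_inv_mulVec m y, ← hAut]
  exact units_inv_mulVec_mulVec m _

lemma units_conj_mem_derSet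
    (hAut : ∀ x y, (h : Matrix (Fin m) (Fin m) ℝ) *ᵥ lam x y = lam (↑h *ᵥ x) (↑h *ᵥ y))
    {D : Matrix (Fin m) (Fin m) ℝ} (hD : D ∈ derSet m lam) :
    (h : Matrix (Fin m) (Fin m) ℝ) * D * (↑h⁻¹ : Matrix (Fin m) (Fin m) ℝ) ∈ derSet m lam :=
  fun x y => by
    simp only [← mulVec_mulVec, units_inv_mulVec_lam m lam hAut, hD _ _, mulVec_add, hAut,
      units_mulVec_inv_mulVec]

lemma units_conj_mem_rnSet
    (hAut : ∀ x y, (h : Matrix (Fin m) (Fin m) ℝ) *ᵥ lam x y = lam (↑h *ᵥ x) (↑h *ᵥ y))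
    {D : Matrix (Fin m) (Fin m) ℝ} (hD : D ∈ rnSet m lam) :
    (h : Matrix (Fin m) (Fin m) ℝ) * D * (↑h⁻¹ : Matrix (Fin m) (Fin m) ℝ) ∈ rnSet m lam := by
  obtain ⟨hder, htr, hricci⟩ := hD
  refine ⟨units_conj_mem_derSet m lam hAut hder, by rwa [trace_units_conj], ?_⟩
  set e := toLinearEquiv' _ (Units.invertible h⁻¹)
  have he : ∀ x, e x = (↑h⁻¹ : Matrix (Fin m) (Fin m) ℝ) *ᵥ x := fun _ => rfl
  refine exists_ricciNegDef_sBr_of_equiv (D := D.mulVecLin) one_ne_zero e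
    (fun x y => ?_) (fun x => ?_) hricci
  · simp only [he, units_inv_mulVec_lam m lam hAut]
  · simp only [he, mulVecLin_apply, one_smul, ← mulVec_mulVec, units_inv_mulVec_mulVec]

end Automorphism

theorem rnSet_open_cone_aut_invariant :
    (∃ U : Set (Matrix (Fin m) (Fin m) ℝ), IsOpen U ∧ rnSet m lam = U ∩ derSet m lam) ∧
    (∀ D ∈ rnSet m lam, ∀ c : ℝ, 0 < c → c • D ∈ rnSet m lam) ∧
    (∀ h : (Matrix (Fin m) (Fin m) ℝ)ˣ,
      (∀ x y, (↑h : Matrix (Fin m) (Fin m) ℝ).mulVec (lam x y) =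
        lam ((↑h : Matrix (Fin m) (Fin m) ℝ).mulVec x) ((↑h : Matrix (Fin m) (Fin m) ℝ).mulVec y)) →
      ∀ D ∈ rnSet m lam,
        (↑h : Matrix (Fin m) (Fin m) ℝ) * D * (↑h⁻¹ : Matrix (Fin m) (Fin m) ℝ) ∈ rnSet m lam) :=
  ⟨⟨_, isOpen_setOf_trace_pos_ricciNegDef_sBr m lam, Set.ext fun _ => and_comm⟩,
    fun _ hD _ hc => smul_mem_rnSet m lam hD hc,
    fun _ hAut _ hD => units_conj_mem_rnSet m lam hAut hD⟩

end
end

section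
/- Let n be a finite-dimensional nilpotent real Lie algebra and assume that n = n₀ ⊕ n₁ as vector spaces, where n₀ is a Lie subalgebra of n, n₁ is an ideal of n, and the center z(n) of n is contained in n₁. Then for any nonzero X₀ ∈ n₀ there exists X₁ ∈ n₁ such that [X₀, X₁] ≠ 0. -/
/-!
The elements of `n₀` that centralize the ideal `n₁` form a subspace `a` of `n₀` stable under
`ad n₀`. Bracketing a nonzero element of `a` with elements of `n₀` as long as the result stays
nonzero pushes it down the lower central series, so by nilpotency some nonzero `Z ∈ a` commutes
with `n₀`. Then `Z` commutes with `n₀ + n₁ = n`, so it is central and lies in `n₀ ∩ n₁ = 0`.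
-/

open LieModule

lemma exists_ne_zero_forall_lie_eq_zero_of_lie_mem {L : Type*} [LieRing L] [LieRing.IsNilpotent L]
    (A S : Set L) (hS : ∀ x ∈ A, ∀ z ∈ S, ⁅x, z⁆ ∈ S) {z : L} (hz : z ∈ S) (hz₀ : z ≠ 0) :
    ∃ Z ∈ S, Z ≠ 0 ∧ ∀ x ∈ A, ⁅x, Z⁆ = 0 := by
  by_contra! h
  have hdescend : ∀ k, ∃ Z ∈ S, Z ≠ 0 ∧ Z ∈ lowerCentralSeries ℤ L L k := by
    intro k
    induction k with
    | zero => exact ⟨z, hz, hz₀, LieSubmodule.mem_top z⟩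
    | succ k ih =>
      obtain ⟨Z, hZS, hZ₀, hZk⟩ := ih
      obtain ⟨x, hxA, hxZ⟩ := h Z hZS hZ₀
      refine ⟨⁅x, Z⁆, hS x hxA Z hZS, hxZ, ?_⟩
      rw [lowerCentralSeries_succ]
      exact LieSubmodule.lie_mem_lie (LieSubmodule.mem_top x) hZk
  obtain ⟨k, hk⟩ := IsNilpotent.nilpotent ℤ L L
  obtain ⟨Z, -, hZ₀, hZk⟩ := hdescend k
  rw [hk, LieSubmodule.mem_bot] at hZk
  exact hZ₀ hZk

lemma lie_lie_eq_zero_of_forall_lie_eq_zero {L : Type*} [LieRing L] {I : Set L} {x z : L}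
    (hI : ∀ y ∈ I, ⁅x, y⁆ ∈ I) (hz : ∀ y ∈ I, ⁅z, y⁆ = 0) : ∀ y ∈ I, ⁅⁅x, z⁆, y⁆ = 0 := by
  intro y hy
  rw [lie_lie, hz y hy, lie_zero, hz _ (hI y hy), sub_zero]

lemma forall_lie_eq_zero_of_sup_eq_top {R L : Type*} [CommRing R] [LieRing L] [LieAlgebra R L]
    {U V : Submodule R L} (hUV : U ⊔ V = ⊤) {z : L}
    (hU : ∀ x ∈ U, ⁅z, x⁆ = 0) (hV : ∀ y ∈ V, ⁅z, y⁆ = 0) : ∀ x : L, ⁅z, x⁆ = 0 := by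
  have hker : U ⊔ V ≤ LinearMap.ker (LieAlgebra.ad R L z) := sup_le hU hV
  intro x
  simpa using hker (hUV ▸ Submodule.mem_top : x ∈ U ⊔ V)

theorem exists_nonzero_bracket_of_decomposition_general
    {n : Type*} [LieRing n] [LieAlgebra ℝ n]
    [LieRing.IsNilpotent n]
    (n₀ n₁ : Submodule ℝ n)
    (hsub : ∀ x ∈ n₀, ∀ y ∈ n₀, ⁅x, y⁆ ∈ n₀)
    (hideal : ∀ x : n, ∀ y ∈ n₁, ⁅x, y⁆ ∈ n₁)
    (hsup : n₀ ⊔ n₁ = ⊤) (hinf : n₀ ⊓ n₁ = ⊥)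
    (hcenter : ∀ z : n, (∀ x : n, ⁅z, x⁆ = 0) → z ∈ n₁) :
    ∀ X₀ ∈ n₀, X₀ ≠ 0 → ∃ X₁ ∈ n₁, ⁅X₀, X₁⁆ ≠ 0 := by
  intro X₀ hX₀ hX₀ne
  by_contra! hX₀n₁
  obtain ⟨Z, ⟨hZn₀, hZn₁⟩, hZ₀, hZcomm⟩ := exists_ne_zero_forall_lie_eq_zero_of_lie_mem
    (n₀ : Set n) {z | z ∈ n₀ ∧ ∀ y ∈ n₁, ⁅z, y⁆ = 0}
    (fun x hx z hz => ⟨hsub x hx z hz.1,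
      lie_lie_eq_zero_of_forall_lie_eq_zero (hideal x) hz.2⟩) ⟨hX₀, hX₀n₁⟩ hX₀ne
  have hcentral : ∀ x : n, ⁅Z, x⁆ = 0 :=
    forall_lie_eq_zero_of_sup_eq_top hsup
      (fun x hx => by rw [← lie_skew, hZcomm x hx, neg_zero]) hZn₁
  have hZinf : Z ∈ n₀ ⊓ n₁ := ⟨hZn₀, hcenter Z hcentral⟩
  rw [hinf, Submodule.mem_bot] at hZinf
  exact hZ₀ hZinf

/-- Let `n` be a finite-dimensional nilpotent real Lie algebra with `n = n₀ ⊕ n₁` as vector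
spaces, where `n₀` is a subalgebra, `n₁` is an ideal and the center of `n` is contained in `n₁`.
Then every nonzero `X₀ ∈ n₀` has a nonzero bracket with some `X₁ ∈ n₁`. -/
theorem exists_nonzero_bracket_of_decomposition
    {n : Type*} [LieRing n] [LieAlgebra ℝ n] [FiniteDimensional ℝ n]
    [LieRing.IsNilpotent n]
    (n₀ n₁ : Submodule ℝ n)
    (hsub : ∀ x ∈ n₀, ∀ y ∈ n₀, ⁅x, y⁆ ∈ n₀)
    (hideal : ∀ x : n, ∀ y ∈ n₁, ⁅x, y⁆ ∈ n₁)
    (hsup : n₀ ⊔ n₁ = ⊤) (hinf : n₀ ⊓ n₁ = ⊥)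
    (hcenter : ∀ z : n, (∀ x : n, ⁅z, x⁆ = 0) → z ∈ n₁) :
    ∀ X₀ ∈ n₀, X₀ ≠ 0 → ∃ X₁ ∈ n₁, ⁅X₀, X₁⁆ ≠ 0 :=
  exists_nonzero_bracket_of_decomposition_general n₀ n₁ hsub hideal hsup hinf hcenter
end

section
/- Let λ be the nilpotent Lie bracket on ℝ⁵ defined by λ(e₁,e₂) = e₃ + e₄, λ(e₁,e₃) = e₅, λ(e₁,e₄) = e₅ (all other brackets of basis vectors zero), and let G ⊆ GL₅(ℝ) be the group of matrices of block-diagonal form diag(h₁, h₂, H, h₅) with h₁, h₂, h₅ > 0 and H ∈ GL₂(ℝ) of positive determinant (acting on the middle coordinates e₃, e₄). Then {m(μ) : μ a nonzero element of the closure of G·λ and m(μ) diagonal} = {a·F₁₂³ + b·F₁₂⁴ + c·F₁₃⁵ + d·F₁₄⁵ : a,b,c,d ≥ 0, a+b+c+d = 1, ab = cd}. -/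
open Finset Matrix

noncomputable section

section RicciToolkit

variable {V : Type*} [AddCommGroup V] [Module ℝ V] {ι : Type*} [Fintype ι] [DecidableEq ι]

lemma sBr_apply (μ : V →ₗ[ℝ] V →ₗ[ℝ] V) (D : V →ₗ[ℝ] V) (p q : ℝ × V) :
    sBr μ D p q = (0, p.1 • D q.2 - q.1 • D p.2 + μ p.2 q.2) := by
  simp [sBr, Prod.ext_iff]

end RicciToolkit

variable {m : ℕ}

/-- The bilinear bracket on `ℝ^m` with structure constants `c`. -/
def br (c : Fin m → Fin m → Fin m → ℝ) (x y : Fin m → ℝ) : Fin m → ℝ :=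
  fun k => ∑ i, ∑ j, x i * y j * c i j k

/-- The bracket `br c` as a bundled bilinear map. -/
def brL (c : Fin m → Fin m → Fin m → ℝ) :
    (Fin m → ℝ) →ₗ[ℝ] (Fin m → ℝ) →ₗ[ℝ] (Fin m → ℝ) :=
  LinearMap.mk₂ ℝ (br c)
    (fun x x' y => by
      funext k
      simp only [br, Pi.add_apply, add_mul, Finset.sum_add_distrib])
    (fun a x y => by
      funext k
      simp only [br, Pi.smul_apply, smul_eq_mul, Finset.mul_sum]
      exact Finset.sum_congr rfl fun i _ => Finset.sum_congr rfl fun j _ => by ring)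
    (fun x y y' => by
      funext k
      simp only [br, Pi.add_apply, mul_add, add_mul, Finset.sum_add_distrib])
    (fun a x y => by
      funext k
      simp only [br, Pi.smul_apply, smul_eq_mul, Finset.mul_sum]
      exact Finset.sum_congr rfl fun i _ => Finset.sum_congr rfl fun j _ => by ring)

/-- Action of an invertible matrix `g` on brackets: `(g·μ)(x,y) = g μ(g⁻¹x, g⁻¹y)`. -/
def actGL (g : (Matrix (Fin m) (Fin m) ℝ)ˣ) (c : Fin m → Fin m → Fin m → ℝ) :
    Fin m → Fin m → Fin m → ℝ :=
  fun i j k => ∑ p, ∑ q, ∑ l, ((↑g⁻¹ : Matrix (Fin m) (Fin m) ℝ) p i) *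
    ((↑g⁻¹ : Matrix (Fin m) (Fin m) ℝ) q j) * ((↑g : Matrix (Fin m) (Fin m) ℝ) k l) * c p q l

/-- Action of the positive diagonal matrix `diagonal d` on brackets. -/
def actDiag (d : Fin m → ℝ) (c : Fin m → Fin m → Fin m → ℝ) :
    Fin m → Fin m → Fin m → ℝ :=
  fun i j k => (d k / (d i * d j)) * c i j k

/-- The canonical inner product on `Λ²(ℝ^m)^* ⊗ ℝ^m`, in structure-constant coordinates
(the weight vectors `μ_ijk`, `i < j`, form an orthonormal basis). -/
def bip3 (c d : Fin m → Fin m → Fin m → ℝ) : ℝ :=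
  (1/2) * ∑ i, ∑ j, ∑ k, c i j k * d i j k

/-- The `gl`-action of a matrix `E` on a bracket `c`:
`(E·μ)(x,y) = E μ(x,y) − μ(Ex,y) − μ(x,Ey)`. -/
def actE (E : Matrix (Fin m) (Fin m) ℝ) (c : Fin m → Fin m → Fin m → ℝ) :
    Fin m → Fin m → Fin m → ℝ :=
  fun i j k => (∑ l, E k l * c i j l) - (∑ l, E l i * c l j k) - (∑ l, E l j * c i l k)

/-- The moment map: `mm c` is the symmetric matrix satisfying
`⟨mm c, E⟩ = ⟨E·c, c⟩ / |c|²` for every symmetric matrix `E`. -/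
def mm (c : Fin m → Fin m → Fin m → ℝ) : Matrix (Fin m) (Fin m) ℝ :=
  Matrix.of fun a b => (1 / (2 * bip3 c c)) *
    bip3 (actE (Matrix.single a b 1 + Matrix.single b a 1) c) c

/-- The diagonal matrix `F_ij^k = E_kk - E_ii - E_jj`. -/
def Fmat (i j k : Fin m) : Matrix (Fin m) (Fin m) ℝ :=
  Matrix.single k k 1 - Matrix.single i i 1 - Matrix.single j j 1

/-- `D` (as a matrix) is a derivation of the bracket `c`. -/
def IsDerivM (c : Fin m → Fin m → Fin m → ℝ) (D : Matrix (Fin m) (Fin m) ℝ) : Prop :=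
  ∀ x y, D.mulVec (br c x y) = br c (D.mulVec x) y + br c x (D.mulVec y)

/-- Nilpotency of the bracket `br c`. -/
def IsNilpotentArr (c : Fin m → Fin m → Fin m → ℝ) : Prop :=
  ∃ N : ℕ, ∀ (f : Fin N → (Fin m → ℝ)) (y : Fin m → ℝ),
    (List.ofFn f).foldr (fun x a => br c x a) y = 0

/-- `c` are the structure constants of a Lie bracket. -/
def IsLieArr (c : Fin m → Fin m → Fin m → ℝ) : Prop :=
  (∀ i j k, c j i k = - c i j k) ∧
    ∀ x y z, br c x (br c y z) + br c y (br c z x) + br c z (br c x y) = 0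

/-- The canonical basis `{f} ∪ {e_i}` of `s_D = ℝ f ⊕ ℝ^m`. -/
def sBasis (m : ℕ) : Module.Basis (Unit ⊕ Fin m) ℝ (ℝ × (Fin m → ℝ)) :=
  (Module.Basis.singleton Unit ℝ).prod (Pi.basisFun ℝ (Fin m))

/-- A derivation `D` of `n = (ℝ^m, c)` with `tr D > 0` is *strongly Ricci negative* if the
solvable extension `s_D = ℝ f ⊕ n` admits an inner product of negative Ricci curvature such
that `f ⊥ n` and `D` is symmetric with respect to its restriction to `n`. -/
def StronglyRicciNegative (c : Fin m → Fin m → Fin m → ℝ)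
    (D : Matrix (Fin m) (Fin m) ℝ) : Prop :=
  0 < D.trace ∧
  ∃ b : Module.Basis (Unit ⊕ Fin m) ℝ (ℝ × (Fin m → ℝ)),
    (∀ x : Fin m → ℝ, bip b ((1 : ℝ), (0 : Fin m → ℝ)) ((0 : ℝ), x) = 0) ∧
    (∀ x y : Fin m → ℝ,
      bip b ((0 : ℝ), D.mulVec x) ((0 : ℝ), y) = bip b ((0 : ℝ), x) ((0 : ℝ), D.mulVec y)) ∧
    RicciNegDef b (sBr (brL c) D.mulVecLin)

/-- The weight vector `μ_ijk = (e^i ∧ e^j) ⊗ e_k` in structure-constant coordinates. -/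
def wtArr (i j k : Fin 5) : Fin 5 → Fin 5 → Fin 5 → ℝ :=
  fun a b l => (if a = i ∧ b = j ∧ l = k then (1 : ℝ) else 0)
    - (if a = j ∧ b = i ∧ l = k then (1 : ℝ) else 0)

/-- The nilpotent Lie bracket on `ℝ⁵` with `[e₁,e₂] = e₃ + e₄`, `[e₁,e₃] = e₅`,
`[e₁,e₄] = e₅`. -/
def lam5 : Fin 5 → Fin 5 → Fin 5 → ℝ :=
  wtArr 0 1 2 + wtArr 0 1 3 + wtArr 0 2 4 + wtArr 0 3 4

/-- The subgroup `G = {diag(h₁, h₂, H, h₅) : h₁, h₂, h₅ > 0, H ∈ GL₂⁺(ℝ)} ⊆ GL₅(ℝ)`. -/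
def G17 : Set ((Matrix (Fin 5) (Fin 5) ℝ)ˣ) :=
  {g | (∀ i j : Fin 5,
      ¬ ((i = 0 ∧ j = 0) ∨ (i = 1 ∧ j = 1) ∨ (i = 4 ∧ j = 4) ∨
        ((i = 2 ∨ i = 3) ∧ (j = 2 ∨ j = 3))) →
      (↑g : Matrix (Fin 5) (Fin 5) ℝ) i j = 0) ∧
    0 < (↑g : Matrix (Fin 5) (Fin 5) ℝ) 0 0 ∧
    0 < (↑g : Matrix (Fin 5) (Fin 5) ℝ) 1 1 ∧
    0 < (↑g : Matrix (Fin 5) (Fin 5) ℝ) 4 4 ∧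
    0 < ((↑g : Matrix (Fin 5) (Fin 5) ℝ) 2 2 * (↑g : Matrix (Fin 5) (Fin 5) ℝ) 3 3
      - (↑g : Matrix (Fin 5) (Fin 5) ℝ) 2 3 * (↑g : Matrix (Fin 5) (Fin 5) ℝ) 3 2)}

/-
The group `G` is block diagonal for the blocks `{e₁}, {e₂}, {e₃, e₄}, {e₅}`, so `G·λ` stays in the
span `W` of the weight vectors `μ₁₂³, μ₁₂⁴, μ₁₃⁵, μ₁₄⁵`, and hence so does its closure. On `W` the
moment map is explicit: for `μ = x μ₁₂³ + y μ₁₂⁴ + z μ₁₃⁵ + w μ₁₄⁵`,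
`|μ|² m(μ) = x² F₁₂³ + y² F₁₂⁴ + z² F₁₃⁵ + w² F₁₄⁵ + (xy - zw)(E₃₄ + E₄₃)`,
so `m(μ)` is diagonal iff `xy = zw`, and then `(a, b, c, d) = (x², y², z², w²)/|μ|²`.
Conversely every such `μ` with `xz + yw > 0` lies in `G·λ`, so those with `x, y, z, w ≥ 0`
lie in its closure; taking `x = √a`, … gives the reverse inclusion.
-/

lemma bip3_self_eq_zero_iff {c : Fin m → Fin m → Fin m → ℝ} : bip3 c c = 0 ↔ c = 0 := by
  refine ⟨fun h => ?_, fun h => by simp [h, bip3]⟩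
  have hsum : ∑ i, ∑ j, ∑ k, c i j k * c i j k = 0 := by
    simpa [bip3] using h
  have nonneg₃ : ∀ i j, 0 ≤ ∑ k, c i j k * c i j k := fun i j =>
    Finset.sum_nonneg fun k _ => mul_self_nonneg _
  have nonneg₂ : ∀ i, 0 ≤ ∑ j, ∑ k, c i j k * c i j k := fun i =>
    Finset.sum_nonneg fun j _ => nonneg₃ i j
  funext i j k
  have hi := (Fintype.sum_eq_zero_iff_of_nonneg nonneg₂).1 hsum
  have hij := (Fintype.sum_eq_zero_iff_of_nonneg (nonneg₃ i)).1 (congrFun hi i)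
  have hijk := (Fintype.sum_eq_zero_iff_of_nonneg fun k => mul_self_nonneg (c i j k)).1
    (congrFun hij j)
  exact mul_self_eq_zero.1 (congrFun hijk k)

lemma bip3_add_right (c d d' : Fin m → Fin m → Fin m → ℝ) :
    bip3 c (d + d') = bip3 c d + bip3 c d' := by
  simp only [bip3, Pi.add_apply, mul_add, Finset.sum_add_distrib]

lemma bip3_smul_right (c d : Fin m → Fin m → Fin m → ℝ) (r : ℝ) :
    bip3 c (r • d) = r * bip3 c d := by
  simp only [bip3, Pi.smul_apply, smul_eq_mul, Finset.mul_sum]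
  exact Finset.sum_congr rfl fun _ _ => Finset.sum_congr rfl fun _ _ =>
    Finset.sum_congr rfl fun _ _ => by ring

lemma actGL_add (g : (Matrix (Fin m) (Fin m) ℝ)ˣ) (c d : Fin m → Fin m → Fin m → ℝ) :
    actGL g (c + d) = actGL g c + actGL g d := by
  funext i j k
  simp only [actGL, Pi.add_apply, mul_add, Finset.sum_add_distrib]

lemma isDiag_Fmat (i j k : Fin m) : (Fmat i j k).IsDiag := by
  intro a b hab
  simp only [Fmat, Matrix.sub_apply, Matrix.single_apply]
  grind

lemma isSymm_single_add_single (a b : Fin m) : (single a b (1 : ℝ) + single b a 1).IsSymm :=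
  IsSymm.ext fun i j => by simp only [Matrix.add_apply, Matrix.single_apply]; grind

lemma mm_eq_inv_bip3_smul {c : Fin m → Fin m → Fin m → ℝ} {N : Matrix (Fin m) (Fin m) ℝ}
    (hN : N.IsSymm) (h : ∀ E, bip3 (actE E c) c = ∑ a, ∑ b, E a b * N a b) :
    mm c = (bip3 c c)⁻¹ • N := by
  ext a b
  have hba : N b a = N a b := hN.apply a b
  simp [mm, h, Matrix.single_apply, add_mul, Finset.sum_add_distrib, ite_and, hba]
  ring

theorem Matrix.inv_apply_eq_zero_of_block {ι α R : Type*} [Fintype ι] [DecidableEq ι]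
    [LinearOrder α] [CommRing R] {M : Matrix ι ι R} [Invertible M] {b : ι → α}
    (hM : ∀ i j, b i ≠ b j → M i j = 0) {i j : ι} (hij : b i ≠ b j) : M⁻¹ i j = 0 := by
  have hlt : M.BlockTriangular b := fun i j h => hM i j h.ne'
  have hgt : M.BlockTriangular (OrderDual.toDual ∘ b) := fun i j h => hM i j h.ne'
  rcases hij.lt_or_gt with h | h
  · exact blockTriangular_inv_of_blockTriangular hgt (OrderDual.toDual_lt_toDual.2 h)
  · exact blockTriangular_inv_of_blockTriangular hlt h

lemma bip3_wtArr (c : Fin 5 → Fin 5 → Fin 5 → ℝ) (i j k : Fin 5) :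
    bip3 c (wtArr i j k) = (c i j k - c j i k) / 2 := by
  simp [bip3, wtArr, mul_sub, Finset.sum_sub_distrib, ite_and]
  ring

lemma actGL_wtArr (g : (Matrix (Fin 5) (Fin 5) ℝ)ˣ) (a b k : Fin 5) :
    actGL g (wtArr a b k) = ∑ i, ∑ j, ∑ l,
      ((↑g⁻¹ : Matrix (Fin 5) (Fin 5) ℝ) a i * (↑g⁻¹ : Matrix (Fin 5) (Fin 5) ℝ) b j *
        (↑g : Matrix (Fin 5) (Fin 5) ℝ) l k) • wtArr i j l := by
  funext p q r
  simp [actGL, wtArr, Finset.sum_apply, mul_sub, Finset.sum_sub_distrib, ite_and]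
  exact Or.inl (mul_comm _ _)

-- `x μ₁₂³ + y μ₁₂⁴ + z μ₁₃⁵ + w μ₁₄⁵` (indices are shifted by one in `Fin 5`).
def wtComb (x y z w : ℝ) : Fin 5 → Fin 5 → Fin 5 → ℝ :=
  x • wtArr 0 1 2 + y • wtArr 0 1 3 + z • wtArr 0 2 4 + w • wtArr 0 3 4

lemma bip3_wtComb (c : Fin 5 → Fin 5 → Fin 5 → ℝ) (x y z w : ℝ) :
    bip3 c (wtComb x y z w) = (x * (c 0 1 2 - c 1 0 2) + y * (c 0 1 3 - c 1 0 3)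
      + z * (c 0 2 4 - c 2 0 4) + w * (c 0 3 4 - c 3 0 4)) / 2 := by
  simp only [wtComb, bip3_add_right, bip3_smul_right, bip3_wtArr]
  ring

lemma bip3_wtComb_self (x y z w : ℝ) :
    bip3 (wtComb x y z w) (wtComb x y z w) = x ^ 2 + y ^ 2 + z ^ 2 + w ^ 2 := by
  rw [bip3_wtComb]
  simp [wtComb, wtArr]
  ring

lemma bip3_actE_wtComb (E : Matrix (Fin 5) (Fin 5) ℝ) (x y z w : ℝ) :
    bip3 (actE E (wtComb x y z w)) (wtComb x y z w) = ∑ a, ∑ b, E a b *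
      (x ^ 2 • Fmat 0 1 2 + y ^ 2 • Fmat 0 1 3 + z ^ 2 • Fmat 0 2 4 + w ^ 2 • Fmat 0 3 4
        + (x * y - z * w) • (single 2 3 1 + single 3 2 1) : Matrix (Fin 5) (Fin 5) ℝ) a b := by
  rw [bip3_wtComb]
  simp [actE, wtComb, wtArr, Fin.sum_univ_five, Fmat, Matrix.single_apply]
  ring

lemma mm_wtComb (x y z w : ℝ) :
    mm (wtComb x y z w) = (x ^ 2 + y ^ 2 + z ^ 2 + w ^ 2)⁻¹ •
      (x ^ 2 • Fmat 0 1 2 + y ^ 2 • Fmat 0 1 3 + z ^ 2 • Fmat 0 2 4 + w ^ 2 • Fmat 0 3 4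
        + (x * y - z * w) • (single 2 3 1 + single 3 2 1)) := by
  rw [mm_eq_inv_bip3_smul _ (bip3_actE_wtComb · x y z w), bip3_wtComb_self]
  exact ((((((isDiag_Fmat _ _ _).isSymm.smul _).add ((isDiag_Fmat _ _ _).isSymm.smul _)).add
    ((isDiag_Fmat _ _ _).isSymm.smul _)).add ((isDiag_Fmat _ _ _).isSymm.smul _)).add
    ((isSymm_single_add_single _ _).smul _))

lemma mm_wtComb_apply_two_three (x y z w : ℝ) :
    mm (wtComb x y z w) 2 3 = (x ^ 2 + y ^ 2 + z ^ 2 + w ^ 2)⁻¹ * (x * y - z * w) := by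
  simp [mm_wtComb, Fmat]

lemma mm_wtComb_of_mul_eq {x y z w : ℝ} (h : x * y = z * w) :
    mm (wtComb x y z w) =
      ((x ^ 2 + y ^ 2 + z ^ 2 + w ^ 2)⁻¹ * x ^ 2) • Fmat 0 1 2
        + ((x ^ 2 + y ^ 2 + z ^ 2 + w ^ 2)⁻¹ * y ^ 2) • Fmat 0 1 3
        + ((x ^ 2 + y ^ 2 + z ^ 2 + w ^ 2)⁻¹ * z ^ 2) • Fmat 0 2 4
        + ((x ^ 2 + y ^ 2 + z ^ 2 + w ^ 2)⁻¹ * w ^ 2) • Fmat 0 3 4 := by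
  rw [mm_wtComb, sub_eq_zero.2 h, zero_smul, add_zero]
  simp only [smul_add, smul_smul]

-- `G17` consists of the block-diagonal matrices for the blocks `{e₁}, {e₂}, {e₃, e₄}, {e₅}`.
def g17Block : Fin 5 → ℕ := ![0, 1, 2, 2, 3]

lemma apply_eq_zero_of_mem_G17 {g : (Matrix (Fin 5) (Fin 5) ℝ)ˣ} (hg : g ∈ G17) {i j : Fin 5}
    (hij : g17Block i ≠ g17Block j) : (↑g : Matrix (Fin 5) (Fin 5) ℝ) i j = 0 :=
  hg.1 i j (by fin_cases i <;> fin_cases j <;> simp_all [g17Block])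

lemma inv_apply_eq_zero_of_mem_G17 {g : (Matrix (Fin 5) (Fin 5) ℝ)ˣ} (hg : g ∈ G17) {i j : Fin 5}
    (hij : g17Block i ≠ g17Block j) : (↑g⁻¹ : Matrix (Fin 5) (Fin 5) ℝ) i j = 0 := by
  let := g.invertible
  rw [Matrix.coe_units_inv]
  exact Matrix.inv_apply_eq_zero_of_block (fun _ _ => apply_eq_zero_of_mem_G17 hg) hij

lemma actGL_lam5_of_mem_G17 {g : (Matrix (Fin 5) (Fin 5) ℝ)ˣ} (hg : g ∈ G17) :
    let A : Matrix (Fin 5) (Fin 5) ℝ := g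
    let B : Matrix (Fin 5) (Fin 5) ℝ := ↑g⁻¹
    actGL g lam5 = wtComb (B 0 0 * B 1 1 * (A 2 2 + A 2 3)) (B 0 0 * B 1 1 * (A 3 2 + A 3 3))
      (B 0 0 * A 4 4 * (B 2 2 + B 3 2)) (B 0 0 * A 4 4 * (B 2 3 + B 3 3)) := by
  intro A B
  have hA : ∀ i j, g17Block i ≠ g17Block j → (↑g : Matrix (Fin 5) (Fin 5) ℝ) i j = 0 :=
    fun _ _ => apply_eq_zero_of_mem_G17 hg
  have hB : ∀ i j, g17Block i ≠ g17Block j → (↑g⁻¹ : Matrix (Fin 5) (Fin 5) ℝ) i j = 0 :=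
    fun _ _ => inv_apply_eq_zero_of_mem_G17 hg
  simp only [lam5, actGL_add, actGL_wtArr, Fin.sum_univ_five]
  simp (disch := decide) only [hA, hB, zero_mul, mul_zero, zero_smul, add_zero, zero_add]
  simp only [wtComb, A, B]
  module

def wtSpan : Submodule ℝ (Fin 5 → Fin 5 → Fin 5 → ℝ) :=
  Submodule.span ℝ {wtArr 0 1 2, wtArr 0 1 3, wtArr 0 2 4, wtArr 0 3 4}

lemma mem_wtSpan_iff {μ : Fin 5 → Fin 5 → Fin 5 → ℝ} :
    μ ∈ wtSpan ↔ ∃ x y z w, μ = wtComb x y z w := by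
  simp only [wtSpan, Submodule.mem_span_insert, Submodule.mem_span_singleton, wtComb]
  constructor
  · rintro ⟨x, _, ⟨y, _, ⟨z, _, ⟨w, rfl⟩, rfl⟩, rfl⟩, rfl⟩
    exact ⟨x, y, z, w, by abel⟩
  · rintro ⟨x, y, z, w, rfl⟩
    exact ⟨x, _, ⟨y, _, ⟨z, _, ⟨w, rfl⟩, rfl⟩, rfl⟩, by abel⟩

lemma closure_orbit_subset_wtSpan :
    closure {c' | ∃ g ∈ G17, c' = actGL g lam5} ⊆ wtSpan := by
  refine closure_minimal ?_ wtSpan.closed_of_finiteDimensional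
  rintro _ ⟨g, hg, rfl⟩
  exact mem_wtSpan_iff.2 ⟨_, _, _, _, actGL_lam5_of_mem_G17 hg⟩

/- `diag(1, 1, H, det H)` with `H = ½ [[x + w, x - w], [y - z, y + z]]`: `H` sends `e₃ + e₄` to
`x e₃ + y e₄`, `det H = (xz + yw)/2`, and the column sums of `H⁻¹` are `(z, w) / det H`. -/
def orbitWitnessVal (x y z w : ℝ) : Matrix (Fin 5) (Fin 5) ℝ :=
  !![1, 0, 0, 0, 0; 0, 1, 0, 0, 0; 0, 0, (x + w) / 2, (x - w) / 2, 0;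
    0, 0, (y - z) / 2, (y + z) / 2, 0; 0, 0, 0, 0, (x * z + y * w) / 2]

def orbitWitnessInv (x y z w : ℝ) : Matrix (Fin 5) (Fin 5) ℝ :=
  !![1, 0, 0, 0, 0; 0, 1, 0, 0, 0;
    0, 0, (y + z) / (x * z + y * w), (w - x) / (x * z + y * w), 0;
    0, 0, (z - y) / (x * z + y * w), (x + w) / (x * z + y * w), 0;
    0, 0, 0, 0, 2 / (x * z + y * w)]

lemma orbitWitnessVal_mul_inv {x y z w : ℝ} (hQ : x * z + y * w ≠ 0) :
    orbitWitnessVal x y z w * orbitWitnessInv x y z w = 1 := by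
  ext i j
  fin_cases i <;> fin_cases j <;>
    simp [orbitWitnessVal, orbitWitnessInv, Matrix.mul_apply, Fin.sum_univ_five] <;> grind

def orbitWitness (x y z w : ℝ) (hQ : x * z + y * w ≠ 0) : (Matrix (Fin 5) (Fin 5) ℝ)ˣ where
  val := orbitWitnessVal x y z w
  inv := orbitWitnessInv x y z w
  val_inv := orbitWitnessVal_mul_inv hQ
  inv_val := mul_eq_one_comm.1 (orbitWitnessVal_mul_inv hQ)

lemma orbitWitness_mem_G17 {x y z w : ℝ} (hQ : 0 < x * z + y * w) :
    orbitWitness x y z w hQ.ne' ∈ G17 := by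
  refine ⟨fun i j hij => ?_, ?_, ?_, ?_, ?_⟩
  · fin_cases i <;> fin_cases j <;> simp_all [orbitWitness, orbitWitnessVal]
  · simp [orbitWitness, orbitWitnessVal]
  · simp [orbitWitness, orbitWitnessVal]
  · simp [orbitWitness, orbitWitnessVal, hQ]
  · simp [orbitWitness, orbitWitnessVal]
    nlinarith

lemma wtComb_mem_orbit {x y z w : ℝ} (hQ : 0 < x * z + y * w) :
    wtComb x y z w ∈ {c' | ∃ g ∈ G17, c' = actGL g lam5} := by
  have hQ' := hQ.ne'
  refine ⟨_, orbitWitness_mem_G17 hQ, ?_⟩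
  rw [actGL_lam5_of_mem_G17 (orbitWitness_mem_G17 hQ)]
  congr 1 <;> simp [orbitWitness, orbitWitnessVal, orbitWitnessInv] <;> grind

lemma wtComb_mem_closure_orbit {x y z w : ℝ} (hx : 0 ≤ x) (hy : 0 ≤ y) (hz : 0 ≤ z)
    (hw : 0 ≤ w) : wtComb x y z w ∈ closure {c' | ∃ g ∈ G17, c' = actGL g lam5} := by
  have hcont : Continuous fun t : ℝ => wtComb (x + t) (y + t) (z + t) (w + t) := by
    unfold wtComb
    fun_prop
  have hlim : Filter.Tendsto (fun t : ℝ => wtComb (x + t) (y + t) (z + t) (w + t))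
      (nhdsWithin 0 (Set.Ioi 0)) (nhds (wtComb x y z w)) := by
    simpa using (hcont.tendsto 0).mono_left nhdsWithin_le_nhds
  refine mem_closure_of_tendsto hlim (eventually_nhdsWithin_of_forall fun t (ht : 0 < t) => ?_)
  exact wtComb_mem_orbit (add_pos
    (mul_pos (add_pos_of_nonneg_of_pos hx ht) (add_pos_of_nonneg_of_pos hz ht))
    (mul_pos (add_pos_of_nonneg_of_pos hy ht) (add_pos_of_nonneg_of_pos hw ht)))

lemma mm_wtComb_sqrt {a b c d : ℝ} (ha : 0 ≤ a) (hb : 0 ≤ b) (hc : 0 ≤ c) (hd : 0 ≤ d)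
    (hsum : a + b + c + d = 1) (habcd : a * b = c * d) :
    mm (wtComb √a √b √c √d) =
      a • Fmat 0 1 2 + b • Fmat 0 1 3 + c • Fmat 0 2 4 + d • Fmat 0 3 4 := by
  have hxy : √a * √b = √c * √d := by rw [← Real.sqrt_mul ha, ← Real.sqrt_mul hc, habcd]
  rw [mm_wtComb_of_mul_eq hxy, Real.sq_sqrt ha, Real.sq_sqrt hb, Real.sq_sqrt hc,
    Real.sq_sqrt hd, hsum, inv_one]
  simp only [one_mul]

/-- **(Example `tricky`.)** For the above 5-dimensional nilpotent Lie bracket, the diagonal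
values of the moment map on the closure of the orbit `G·λ` form the set
`{a F₁₂³ + b F₁₂⁴ + c F₁₃⁵ + d F₁₄⁵ : a,b,c,d ≥ 0, a+b+c+d = 1, ab = cd}`. -/
theorem moment_image_example_dim5 :
    {M | ∃ μ, μ ≠ 0 ∧ μ ∈ closure {c' | ∃ g ∈ G17, c' = actGL g lam5} ∧
      (mm μ).IsDiag ∧ M = mm μ} =
    {M | ∃ a b c d : ℝ, 0 ≤ a ∧ 0 ≤ b ∧ 0 ≤ c ∧ 0 ≤ d ∧ a + b + c + d = 1 ∧ a * b = c * d ∧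
      M = a • Fmat 0 1 2 + b • Fmat 0 1 3 + c • Fmat 0 2 4 + d • Fmat 0 3 4} := by
  ext M
  constructor
  · rintro ⟨μ, hμ0, hμ, hdiag, rfl⟩
    obtain ⟨x, y, z, w, rfl⟩ := mem_wtSpan_iff.1 (closure_orbit_subset_wtSpan hμ)
    have hS : x ^ 2 + y ^ 2 + z ^ 2 + w ^ 2 ≠ 0 := by
      rwa [← bip3_wtComb_self, Ne, bip3_self_eq_zero_iff]
    have hxy : x * y = z * w := by
      have h23 : mm (wtComb x y z w) 2 3 = 0 := hdiag (by decide)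
      rw [mm_wtComb_apply_two_three, mul_eq_zero] at h23
      exact sub_eq_zero.1 (h23.resolve_left (inv_ne_zero hS))
    refine ⟨_, _, _, _, by positivity, by positivity, by positivity, by positivity, ?_, ?_,
      mm_wtComb_of_mul_eq hxy⟩
    · rw [← mul_add, ← mul_add, ← mul_add, inv_mul_cancel₀ hS]
    · linear_combination ((x ^ 2 + y ^ 2 + z ^ 2 + w ^ 2)⁻¹ ^ 2 * (x * y + z * w)) * hxy
  · rintro ⟨a, b, c, d, ha, hb, hc, hd, hsum, habcd, rfl⟩
    have hm := mm_wtComb_sqrt ha hb hc hd hsum habcd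
    refine ⟨wtComb √a √b √c √d, ?_, wtComb_mem_closure_orbit (Real.sqrt_nonneg a)
      (Real.sqrt_nonneg b) (Real.sqrt_nonneg c) (Real.sqrt_nonneg d), ?_, hm.symm⟩
    · rw [Ne, ← bip3_self_eq_zero_iff, bip3_wtComb_self, Real.sq_sqrt ha, Real.sq_sqrt hb,
        Real.sq_sqrt hc, Real.sq_sqrt hd, hsum]
      exact one_ne_zero
    · rw [hm]
      exact ((((isDiag_Fmat _ _ _).smul _).add ((isDiag_Fmat _ _ _).smul _)).add
        ((isDiag_Fmat _ _ _).smul _)).add ((isDiag_Fmat _ _ _).smul _)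

end
end
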